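/- For fixed a ∈ (0, 1/2], one has the power-series identity f₁(r) = ((2a-1)/(1-a))·(1-r²)·𝒦ₐ(r) + 2·ℰₐ(r) = π/(2(1-a)) − (π/2)·Σ_{n≥1} [((a)_{n-1}(1-a)_{n-1}/((n-1)!)²)·((2a²-2a+1)n + a(a-1))/((1-a)n²)]·r^{2n} for all r ∈ (0,1). -/
import Mathlib


open Real Filter Set Topology

/-- Pochhammer symbol (rising factorial) for real `x`. -/
noncomputable def poch (x : ℝ) (n : ℕ) : ℝ := (ascPochhammer ℝ n).eval x

/-- Generalized complete elliptic integral of the first kind. -/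
noncomputable def Ka (a r : ℝ) : ℝ :=
  (π / 2) * ∑' n : ℕ, (poch a n * poch (1 - a) n / (n.factorial : ℝ) ^ 2) * r ^ (2 * n)

/-- Generalized complete elliptic integral of the second kind. -/
noncomputable def Ea (a r : ℝ) : ℝ :=
  (π / 2) * ∑' n : ℕ, (poch (a - 1) n * poch (1 - a) n / (n.factorial : ℝ) ^ 2) * r ^ (2 * n)

/-- Generalized Grötzsch ring function. -/
noncomputable def muG (a r : ℝ) : ℝ :=
  π / (2 * Real.sin (π * a)) * (Ka a (Real.sqrt (1 - r ^ 2)) / Ka a r)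

/-- Generalized Hersch–Pfluger distortion function. -/
noncomputable def phiHP (a K r : ℝ) : ℝ := Function.invFun (muG a) (muG a r / K)

/-- The function mₐ(r). -/
noncomputable def mA (a r : ℝ) : ℝ :=
  2 / (π * Real.sin (π * a)) * (1 - r ^ 2) * Ka a (Real.sqrt (1 - r ^ 2)) * Ka a r

/-- Digamma function (as the logarithmic derivative of Γ). -/
noncomputable def psiDG (x : ℝ) : ℝ := deriv (fun t => Real.log (Real.Gamma t)) x

/-- Ramanujan constant R(a). -/
noncomputable def RamanujanR (a : ℝ) : ℝ :=
  -2 * Real.eulerMascheroniConstant - psiDG a - psiDG (1 - a)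

private lemma poch_succ (x : ℝ) (n : ℕ) : poch x (n+1) = poch x n * (x + n) := by
  simp [poch, ascPochhammer_succ_right]

private lemma poch_succ_left (x : ℝ) (n : ℕ) : poch x (n+1) = x * poch (x+1) n := by
  simp [poch, ascPochhammer_succ_left, Polynomial.eval_comp]

private lemma poch_pos {x : ℝ} (hx : 0 < x) (n : ℕ) : 0 < poch x n := by
  induction n with
  | zero => simp [poch]
  | succ n ih => rw [poch_succ]; exact mul_pos ih (by positivity)

private lemma summable_aux {c : ℕ → ℝ} (hc : ∀ n, |c (n+1)| ≤ |c n|) {r : ℝ}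
    (hr0 : 0 < r) (hr1 : r < 1) : Summable (fun n => c n * r^(2*n)) := by
  have hr2 : r^2 < 1 := by nlinarith
  apply summable_of_ratio_norm_eventually_le hr2
  filter_upwards with n
  rw [Real.norm_eq_abs, Real.norm_eq_abs, abs_mul, abs_mul, abs_pow, abs_pow,
    abs_of_pos hr0]
  have h2 : r^(2*(n+1)) = r^(2*n) * r^2 := by ring
  rw [h2]
  calc |c (n+1)| * (r^(2*n) * r^2) ≤ |c n| * (r^(2*n) * r^2) := by
        apply mul_le_mul_of_nonneg_right (hc n); positivity
    _ = r^2 * (|c n| * r^(2*n)) := by ring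

set_option maxHeartbeats 1000000 in
theorem f1_series_identity (a : ℝ) (ha : a ∈ Set.Ioc (0:ℝ) (1/2))
    (r : ℝ) (hr : r ∈ Set.Ioo (0:ℝ) 1) :
    ((2*a - 1)/(1 - a)) * (1 - r^2) * Ka a r + 2 * Ea a r =
      π / (2*(1 - a)) - (π / 2) * ∑' n : ℕ,
        (poch a n * poch (1 - a) n / (n.factorial : ℝ)^2) *
          ((2*a^2 - 2*a + 1)*((n:ℝ) + 1) + a*(a - 1)) / ((1 - a)*((n:ℝ) + 1)^2) *
          r^(2*(n+1)) := by
  obtain ⟨ha0, ha2⟩ := ha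
  obtain ⟨hr0, hr1⟩ := hr
  have ha1 : a < 1 := by linarith
  have h1a : (0:ℝ) < 1 - a := by linarith
  have h1a' : (1:ℝ) - a ≠ 0 := ne_of_gt h1a
  set C : ℝ := (2*a - 1)/(1 - a) with hCdef
  set k : ℕ → ℝ := fun n => poch a n * poch (1 - a) n / (n.factorial : ℝ)^2 with hkdef
  set e : ℕ → ℝ := fun n => poch (a - 1) n * poch (1 - a) n / (n.factorial : ℝ)^2 with hedef
  have hfact : ∀ n : ℕ, ((n.factorial : ℝ)) ≠ 0 :=
    fun n => Nat.cast_ne_zero.mpr n.factorial_ne_zero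
  have hkstep : ∀ n : ℕ, k (n+1) = k n * ((a+n)*(1-a+n)) / ((n:ℝ)+1)^2 := by
    intro n
    have h1 : ((n:ℝ)+1) ≠ 0 := by positivity
    simp only [hkdef, poch_succ, Nat.factorial_succ, Nat.cast_mul, Nat.cast_add, Nat.cast_one]
    field_simp
  have hestep : ∀ n : ℕ, e (n+1) = k n * ((a-1)*(1-a+n)) / ((n:ℝ)+1)^2 := by
    intro n
    have h1 : ((n:ℝ)+1) ≠ 0 := by positivity
    have h2 : poch (a-1) (n+1) = (a-1) * poch a n := by
      rw [poch_succ_left]; norm_num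
    simp only [hedef, hkdef, h2, poch_succ, Nat.factorial_succ, Nat.cast_mul, Nat.cast_add,
      Nat.cast_one]
    field_simp
  have hestep2 : ∀ n : ℕ, e (n+1) = e n * ((a-1+n)*(1-a+n)) / ((n:ℝ)+1)^2 := by
    intro n
    have h1 : ((n:ℝ)+1) ≠ 0 := by positivity
    simp only [hedef, poch_succ, Nat.factorial_succ, Nat.cast_mul, Nat.cast_add, Nat.cast_one]
    field_simp
  have hkpos : ∀ n, 0 < k n :=
    fun n => div_pos (mul_pos (poch_pos ha0 n) (poch_pos h1a n)) (by positivity)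
  have hA : Summable (fun n => k n * r^(2*n)) := by
    apply summable_aux ?_ hr0 hr1
    intro n
    have hn : (0:ℝ) ≤ (n:ℝ) := Nat.cast_nonneg n
    rw [abs_of_pos (hkpos (n+1)), abs_of_pos (hkpos n), hkstep,
      div_le_iff₀ (by positivity)]
    nlinarith [mul_pos (hkpos n) (show (0:ℝ) < (n:ℝ)+1-a+a^2 by nlinarith)]
  have hB : Summable (fun n => e n * r^(2*n)) := by
    apply summable_aux ?_ hr0 hr1
    intro n
    have hn : (0:ℝ) ≤ (n:ℝ) := Nat.cast_nonneg n
    rw [hestep2, abs_div, abs_mul]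
    have h2 : |((n:ℝ)+1)^2| = ((n:ℝ)+1)^2 := abs_of_pos (by positivity)
    rw [h2, div_le_iff₀ (by positivity)]
    have h3 : |a-1+(n:ℝ)| ≤ (n:ℝ)+1 := by
      rw [abs_le]; constructor <;> linarith
    have h4 : |(a-1+(n:ℝ))*(1-a+(n:ℝ))| ≤ ((n:ℝ)+1)^2 := by
      rw [abs_mul, abs_of_nonneg (by linarith : (0:ℝ) ≤ 1-a+(n:ℝ))]
      calc |a-1+(n:ℝ)| * (1-a+(n:ℝ)) ≤ ((n:ℝ)+1) * ((n:ℝ)+1) :=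
            mul_le_mul h3 (by linarith) (by linarith) (by linarith)
        _ = ((n:ℝ)+1)^2 := by ring
    calc |e n| * |(a-1+(n:ℝ))*(1-a+(n:ℝ))| ≤ |e n| * ((n:ℝ)+1)^2 :=
          mul_le_mul_of_nonneg_left h4 (abs_nonneg _)
      _ = |e n| * ((n:ℝ)+1)^2 := rfl
  have hA1 : Summable (fun n => k (n+1) * r^(2*(n+1))) := (summable_nat_add_iff 1).mpr hA
  have hB1 : Summable (fun n => e (n+1) * r^(2*(n+1))) := (summable_nat_add_iff 1).mpr hB
  have hKa : Ka a r = π/2 * ∑' n, k n * r^(2*n) := rfl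
  have hEa : Ea a r = π/2 * ∑' n, e n * r^(2*n) := rfl
  have hk0 : k 0 * r^(2*0) = 1 := by simp [hkdef, poch]
  have he0 : e 0 * r^(2*0) = 1 := by simp [hedef, poch]
  have hSK : (∑' n, k n * r^(2*n)) = 1 + ∑' n, k (n+1) * r^(2*(n+1)) := by
    rw [Summable.tsum_eq_zero_add hA]
    congr 1
  have hSE : (∑' n, e n * r^(2*n)) = 1 + ∑' n, e (n+1) * r^(2*(n+1)) := by
    rw [Summable.tsum_eq_zero_add hB]
    congr 1
  have hX : Summable (fun n => C * (k (n+1) * r^(2*(n+1))) - C * (k n * r^(2*n) * r^2)) :=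
    (hA1.mul_left C).sub ((hA.mul_right (r^2)).mul_left C)
  have hY : Summable (fun n => 2 * (e (n+1) * r^(2*(n+1)))) := hB1.mul_left 2
  have hAB : ∑' n, (C * (k (n+1) * r^(2*(n+1))) - C * (k n * r^(2*n) * r^2)
        + 2 * (e (n+1) * r^(2*(n+1))))
      = C * (∑' n, k (n+1) * r^(2*(n+1))) - C * (∑' n, k n * r^(2*n) * r^2)
        + 2 * (∑' n, e (n+1) * r^(2*(n+1))) := by
    rw [Summable.tsum_add hX hY, Summable.tsum_sub (hA1.mul_left C) ((hA.mul_right (r^2)).mul_left C),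
      tsum_mul_left, tsum_mul_left, tsum_mul_left]
  have hD : (∑' n, k n * r^(2*n) * r^2) = (∑' n, k n * r^(2*n)) * r^2 := tsum_mul_right
  have hterm : ∀ n : ℕ,
      C * (k (n+1) * r^(2*(n+1))) - C * (k n * r^(2*n) * r^2) + 2 * (e (n+1) * r^(2*(n+1)))
      = -(k n * ((2*a^2 - 2*a + 1)*((n:ℝ) + 1) + a*(a - 1)) / ((1 - a)*((n:ℝ) + 1)^2)
          * r^(2*(n+1))) := by
    intro n
    have h1 : ((n:ℝ)+1) ≠ 0 := by positivity
    have hrr : r^(2*(n+1)) = r^(2*n) * r^2 := by ring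
    rw [hkstep, hestep, hCdef, hrr]
    field_simp
    ring
  have hC2 : C + 2 = 1/(1-a) := by
    rw [hCdef]; field_simp; ring
  have inner : C * (1 - r^2) * (∑' n, k n * r^(2*n)) + 2 * (∑' n, e n * r^(2*n))
      = 1/(1-a) - ∑' n, (k n * ((2*a^2 - 2*a + 1)*((n:ℝ) + 1) + a*(a - 1))
          / ((1 - a)*((n:ℝ) + 1)^2) * r^(2*(n+1))) := by
    have hsum : ∑' n, (C * (k (n+1) * r^(2*(n+1))) - C * (k n * r^(2*n) * r^2)
          + 2 * (e (n+1) * r^(2*(n+1))))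
        = - ∑' n, (k n * ((2*a^2 - 2*a + 1)*((n:ℝ) + 1) + a*(a - 1))
            / ((1 - a)*((n:ℝ) + 1)^2) * r^(2*(n+1))) := by
      rw [tsum_congr hterm, tsum_neg]
    have key : C * (1 - r^2) * (∑' n, k n * r^(2*n)) + 2 * (∑' n, e n * r^(2*n))
        = (C + 2) + ∑' n, (C * (k (n+1) * r^(2*(n+1))) - C * (k n * r^(2*n) * r^2)
            + 2 * (e (n+1) * r^(2*(n+1)))) := by
      rw [hAB, hD, hSK, hSE]
      ring
    rw [key, hsum, hC2]
    ring
  calc ((2*a - 1)/(1 - a)) * (1 - r^2) * Ka a r + 2 * Ea a r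
      = π/2 * (C * (1 - r^2) * (∑' n, k n * r^(2*n)) + 2 * (∑' n, e n * r^(2*n))) := by
        rw [hKa, hEa]; ring
    _ = π/2 * (1/(1-a) - ∑' n, (k n * ((2*a^2 - 2*a + 1)*((n:ℝ) + 1) + a*(a - 1))
          / ((1 - a)*((n:ℝ) + 1)^2) * r^(2*(n+1)))) := by rw [inner]
    _ = π / (2*(1 - a)) - (π / 2) * ∑' n : ℕ,
        (k n * ((2*a^2 - 2*a + 1)*((n:ℝ) + 1) + a*(a - 1)) / ((1 - a)*((n:ℝ) + 1)^2)
          * r^(2*(n+1))) := by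
        rw [mul_sub]
        congr 1
        field_simp
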